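/- Let u_1,…,u_m ∈ S = K[x_1,…,x_n] be nonconstant monomials with pairwise disjoint supports and let I = (u_1,…,u_m) be the monomial complete intersection they generate (so μ(I) = m). Then for every k ≥ 1, v(I^k) = α(I)·k + ( ∑_{i=1}^m deg(u_i) − α(I) − m ), where α(I) = min_{1≤i≤m} deg(u_i). -/

import Mathlib

open MvPolynomial

noncomputable section

/-- The set of associated primes `Ass(L)` of the quotient by an ideal `L`. -/
def assOf {A : Type} [CommRing A] (L : Ideal A) : Set (Ideal A) :=
  associatedPrimes A (A ⧸ L)

/-- `𝔄` is the stable value `Ass^∞(L)` of `Ass(L^k)` for all large `k`. -/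
def IsStableAssValue {A : Type} [CommRing A] (L : Ideal A) (𝔄 : Set (Ideal A)) : Prop :=
  ∃ N : ℕ, ∀ k : ℕ, N ≤ k → assOf (L ^ k) = 𝔄

/-- `Ass^*(L) = ⋃_{k ≥ 1} Ass(L^k)`. -/
def assStar {A : Type} [CommRing A] (L : Ideal A) : Set (Ideal A) :=
  {p | ∃ k : ℕ, 1 ≤ k ∧ p ∈ assOf (L ^ k)}

/-- The local v-number `v_p(L)`: the least degree of a homogeneous `f` with `(L : f) = p`. -/
def vnum {σ K : Type} [Field K] (L p : Ideal (MvPolynomial σ K)) : ℕ :=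
  sInf {d : ℕ | ∃ f : MvPolynomial σ K, f.IsHomogeneous d ∧ L.colon (Ideal.span {f}) = p}

/-- The v-number `v(L) = min_{p ∈ Ass(L)} v_p(L)`. -/
def vnumber {σ K : Type} [Field K] (L : Ideal (MvPolynomial σ K)) : ℕ :=
  sInf {d : ℕ | ∃ p ∈ assOf L, ∃ f : MvPolynomial σ K,
    f.IsHomogeneous d ∧ L.colon (Ideal.span {f}) = p}

/-- The initial degree `α(L)`: the least `d` such that `L` contains a nonzero
homogeneous element of degree `d`. -/
def alphaDeg {σ K : Type} [Field K] (L : Ideal (MvPolynomial σ K)) : ℕ :=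
  sInf {d : ℕ | ∃ f ∈ L, f ≠ 0 ∧ MvPolynomial.IsHomogeneous f d}

/-- A graded (homogeneous) ideal: one containing all homogeneous components
of each of its elements. -/
def IsGradedIdeal {σ K : Type} [Field K] (I : Ideal (MvPolynomial σ K)) : Prop :=
  ∀ f ∈ I, ∀ d : ℕ, homogeneousComponent d f ∈ I

/-- A monomial ideal: an ideal generated by monomials. -/
def IsMonomialIdeal {σ K : Type} [Field K] (I : Ideal (MvPolynomial σ K)) : Prop :=
  ∃ G : Set (σ →₀ ℕ), I = Ideal.span ((fun a => (monomial a (1 : K))) '' G)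

/-!
Write `uᵢ = x^{aᵢ}`. Because the supports are disjoint, a monomial `x^c` lies in `I^k` exactly
when its adic order `∑ᵢ qᵢ(c)` is at least `k`, where `qᵢ(c)` is the largest `q` with `q • aᵢ ≤ c`.

Lower bound: if `(I^k : f) = p` is prime, some term `x^c` of `f` has order `< k`, while `p ⊇ I`
contains a variable `x_{jᵢ}` of every `uᵢ`, so that `x_{jᵢ} x^c ∈ I^k`. Multiplying by `x_{jᵢ}`
raises only `qᵢ`, and by at most one; hence the order of `x^c` is `k - 1` and
`uᵢ^(qᵢ+1) / x_{jᵢ}` divides `x^c` for every `i`. These divisors have disjoint supports, so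
`deg f ≥ ∑ᵢ ((qᵢ + 1) deg uᵢ - 1) ≥ ∑ᵢ deg uᵢ - m + (k - 1) α`.

Upper bound: for `deg u_s = α`, the colon ideal of `I^k` by `(∏ᵢ uᵢ / x_{jᵢ}) · u_s^(k-1)` is the
prime `(x_{j₁}, …, x_{jₘ})`.
-/

namespace Finsupp

variable {σ : Type*}

open scoped Classical in
/-- The search bound `c.degree` is never reached unless `a = 0`, where the value is junk. -/
def nsmulMultiplicity (a c : σ →₀ ℕ) : ℕ :=
  Nat.findGreatest (fun q => q • a ≤ c) c.degree

variable {a c e : σ →₀ ℕ} {q : ℕ}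

theorem nsmulMultiplicity_nsmul_le : a.nsmulMultiplicity c • a ≤ c := by
  classical
  exact Nat.findGreatest_spec (P := fun q => q • a ≤ c) (Nat.zero_le _) (by simp)

theorem le_nsmulMultiplicity_iff (ha : a ≠ 0) : q ≤ a.nsmulMultiplicity c ↔ q • a ≤ c := by
  classical
  refine ⟨fun hq => (nsmul_le_nsmul_left zero_le hq).trans nsmulMultiplicity_nsmul_le,
    fun hq => Nat.le_findGreatest ?_ hq⟩
  have hdeg : 1 ≤ a.degree := Nat.one_le_iff_ne_zero.2 ((degree_eq_zero_iff a).not.2 ha)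
  calc q ≤ q * a.degree := Nat.le_mul_of_pos_right q hdeg
    _ = (q • a).degree := (map_nsmul degree q a).symm
    _ ≤ c.degree := degree_mono hq

theorem nsmulMultiplicity_mono (ha : a ≠ 0) : Monotone a.nsmulMultiplicity := fun _ _ h =>
  (le_nsmulMultiplicity_iff ha).2 (nsmulMultiplicity_nsmul_le.trans h)

theorem nsmulMultiplicity_add_of_disjoint (ha : a ≠ 0) (h : Disjoint a.support e.support) :
    a.nsmulMultiplicity (c + e) = a.nsmulMultiplicity c := by
  refine eq_of_forall_le_iff fun q => ?_
  rw [le_nsmulMultiplicity_iff ha, le_nsmulMultiplicity_iff ha]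
  refine ⟨fun hq l => ?_, fun hq => hq.trans le_self_add⟩
  by_cases hl : l ∈ a.support
  · simpa [notMem_support_iff.1 (Finset.disjoint_left.1 h hl)] using hq l
  · simp [notMem_support_iff.1 hl]

theorem nsmulMultiplicity_add_self (ha : a ≠ 0) :
    a.nsmulMultiplicity (c + a) = a.nsmulMultiplicity c + 1 := by
  refine eq_of_forall_le_iff fun q => ?_
  rw [le_nsmulMultiplicity_iff ha]
  cases q with
  | zero => simp
  | succ q => rw [succ_nsmul, add_le_add_iff_right, ← le_nsmulMultiplicity_iff ha]; omega

theorem single_le_of_mem_support {l : σ} (hl : l ∈ a.support) : single l 1 ≤ a :=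
  single_le_iff.2 (Nat.one_le_iff_ne_zero.2 (mem_support_iff.1 hl))

theorem nsmulMultiplicity_add_single_le {l : σ} (hl : l ∈ a.support) :
    a.nsmulMultiplicity (c + single l 1) ≤ a.nsmulMultiplicity c + 1 := by
  have ha : a ≠ 0 := by rintro rfl; simp at hl
  rw [← nsmulMultiplicity_add_self ha]
  exact nsmulMultiplicity_mono ha (add_le_add_right (single_le_of_mem_support hl) c)

theorem sum_le_of_pairwise_disjoint {ι : Type*} [Fintype ι] {v : ι → σ →₀ ℕ}
    (hv : Pairwise fun i j => Disjoint (v i).support (v j).support) (hle : ∀ i, v i ≤ c) :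
    ∑ i, v i ≤ c := by
  classical
  intro l
  rw [finsetSum_apply]
  by_cases h : ∃ i, l ∈ (v i).support
  · obtain ⟨i, hi⟩ := h
    rw [Finset.sum_eq_single i (fun t _ hti => notMem_support_iff.1
      (Finset.disjoint_right.1 (hv hti) hi)) (by simp)]
    exact hle i l
  · push Not at h
    simp [notMem_support_iff.1 (h _)]

end Finsupp

namespace MvPolynomial

variable {σ R : Type*}

theorem IsHomogeneous.degree_eq_of_mem_support [CommSemiring R] {φ : MvPolynomial σ R} {n : ℕ}
    (hφ : φ.IsHomogeneous n) {c : σ →₀ ℕ} (hc : c ∈ φ.support) : c.degree = n :=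
  ((hφ.degree_eq_sum_deg_support hc).trans (Finsupp.degree_apply c).symm).symm

theorem exists_X_mem_of_monomial_mem [CommSemiring R] {p : Ideal (MvPolynomial σ R)}
    (hp : p.IsPrime) {a : σ →₀ ℕ} (h : monomial a 1 ∈ p) : ∃ j ∈ a.support, X j ∈ p := by
  rw [← prod_X_pow_eq_monomial, hp.prod_mem_iff] at h
  obtain ⟨j, hj, hjp⟩ := h
  exact ⟨j, hj, hp.mem_of_pow_mem _ hjp⟩

theorem isPrime_span_X_image [CommRing R] [IsDomain R] (S : Set σ) :
    (Ideal.span (X '' S : Set (MvPolynomial σ R))).IsPrime := by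
  classical
  set J := Ideal.span (X '' S : Set (MvPolynomial σ R))
  let kill : MvPolynomial σ R →ₐ[R] MvPolynomial σ R := aeval fun j => if j ∈ S then 0 else X j
  -- `kill` is the identity modulo `J`, so its kernel is `J`.
  have hmod : (Ideal.Quotient.mkₐ R J).comp kill = Ideal.Quotient.mkₐ R J := by
    refine algHom_ext fun j => ?_
    by_cases hj : j ∈ S
    · have hX : X j ∈ J := Ideal.subset_span (Set.mem_image_of_mem X hj)
      simpa [kill, hj] using (Ideal.Quotient.eq_zero_iff_mem.2 hX).symm
    · simp [kill, hj]
  have hker : RingHom.ker kill = J := by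
    refine le_antisymm (fun f hf => ?_) (Ideal.span_le.2 ?_)
    · rw [← Ideal.Quotient.eq_zero_iff_mem, ← Ideal.Quotient.mkₐ_eq_mk R, ← hmod]
      simp [(RingHom.mem_ker).1 hf]
    · rintro _ ⟨j, hj, rfl⟩
      simp [kill, hj]
  rw [← hker]
  exact RingHom.ker_isPrime _

end MvPolynomial

theorem Ideal.mem_associatedPrimes_quotient_of_colon_eq {R : Type*} [CommRing R]
    {L p : Ideal R} {f : R} (hp : p.IsPrime) (h : L.colon (Ideal.span {f}) = p) :
    p ∈ associatedPrimes R (R ⧸ L) := by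
  refine ⟨hp, Ideal.Quotient.mk L f, ?_⟩
  rw [Submodule.bot_colon', hp.radical.symm, ← h]
  congr 1
  ext r
  rw [Submodule.mem_annihilator_span_singleton, Ideal.mem_colon_span_singleton,
    Algebra.smul_def, Ideal.Quotient.algebraMap_eq, ← map_mul, Ideal.Quotient.eq_zero_iff_mem]

namespace MonomialCompleteIntersection

open Finsupp

variable {σ ι : Type*} {a : ι → σ →₀ ℕ} {k : ℕ}

def monomialSpan (R : Type*) [CommSemiring R] (a : ι → σ →₀ ℕ) : Ideal (MvPolynomial σ R) :=
  Ideal.span (Set.range fun i => monomial (a i) (1 : R))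

variable {R : Type*} [CommSemiring R]

theorem monomial_mem_monomialSpan (i : ι) :
    monomial (a i) (1 : R) ∈ monomialSpan R a :=
  Ideal.subset_span ⟨i, rfl⟩

theorem monomialSpan_eq_span_image :
    monomialSpan R a = Ideal.span ((fun c => monomial c (1 : R)) '' Set.range a) := by
  rw [monomialSpan, ← Set.range_comp]
  rfl

variable [Fintype ι]

variable (a) in
def adicOrder (c : σ →₀ ℕ) : ℕ := ∑ i, (a i).nsmulMultiplicity c

theorem adicOrder_mono (hne : ∀ i, a i ≠ 0) : Monotone (adicOrder a) := fun _ _ h =>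
  Finset.sum_le_sum fun i _ => nsmulMultiplicity_mono (hne i) h

theorem adicOrder_add_of_support_subset (hne : ∀ i, a i ≠ 0)
    (hdisj : Pairwise fun i j => Disjoint (a i).support (a j).support)
    {c e : σ →₀ ℕ} {i : ι} (he : e.support ⊆ (a i).support) :
    adicOrder a (c + e) + (a i).nsmulMultiplicity c =
      adicOrder a c + (a i).nsmulMultiplicity (c + e) := by
  classical
  have hrest : ∀ t ∈ Finset.univ.erase i,
      (a t).nsmulMultiplicity (c + e) = (a t).nsmulMultiplicity c := fun t ht =>
    nsmulMultiplicity_add_of_disjoint (hne t) ((hdisj (Finset.ne_of_mem_erase ht)).mono_right he)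
  simp only [adicOrder, ← Finset.add_sum_erase _ _ (Finset.mem_univ i),
    Finset.sum_congr rfl hrest]
  ring

theorem adicOrder_add_generator (hne : ∀ i, a i ≠ 0)
    (hdisj : Pairwise fun i j => Disjoint (a i).support (a j).support) (c : σ →₀ ℕ) (i : ι) :
    adicOrder a (c + a i) = adicOrder a c + 1 := by
  have h := adicOrder_add_of_support_subset hne hdisj (c := c) (subset_refl (a i).support)
  rw [nsmulMultiplicity_add_self (hne i)] at h
  omega

theorem pow_monomialSpan (hne : ∀ i, a i ≠ 0)
    (hdisj : Pairwise fun i j => Disjoint (a i).support (a j).support) :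
    monomialSpan R a ^ k =
      Ideal.span ((fun c => monomial c (1 : R)) '' {c | k ≤ adicOrder a c}) := by
  induction k with
  | zero =>
    rw [pow_zero, Ideal.one_eq_top, eq_comm, Ideal.eq_top_iff_one]
    exact Ideal.subset_span ⟨0, Nat.zero_le _, one_def.symm⟩
  | succ k ih =>
    rw [pow_succ, ih, monomialSpan, Ideal.span_mul_span']
    apply le_antisymm
    · rw [Ideal.span_le]
      rintro _ ⟨_, ⟨c, hc, rfl⟩, _, ⟨i, rfl⟩, rfl⟩
      refine Ideal.subset_span ⟨c + a i, ?_, by simp [monomial_mul]⟩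
      simpa [adicOrder_add_generator hne hdisj] using hc
    · rw [Ideal.span_le]
      rintro _ ⟨c, hc, rfl⟩
      simp only [Set.mem_ofPred_eq] at hc
      obtain ⟨i, -, hi⟩ : ∃ i ∈ Finset.univ, (a i).nsmulMultiplicity c ≠ 0 :=
        Finset.exists_ne_zero_of_sum_ne_zero (by rw [adicOrder] at hc; omega)
      have hle : a i ≤ c := by
        simpa using (le_nsmulMultiplicity_iff (q := 1) (hne i)).1 (Nat.one_le_iff_ne_zero.2 hi)
      have hsplit : c - a i + a i = c := tsub_add_cancel_of_le hle
      refine Ideal.subset_span ⟨_, ⟨c - a i, ?_, rfl⟩, _, ⟨i, rfl⟩, ?_⟩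
      · have := adicOrder_add_generator hne hdisj (c - a i) i
        rw [hsplit] at this
        simp only [Set.mem_ofPred_eq]
        omega
      · simp only [monomial_mul, one_mul, hsplit]

theorem mem_pow_monomialSpan_iff (hne : ∀ i, a i ≠ 0)
    (hdisj : Pairwise fun i j => Disjoint (a i).support (a j).support) {f : MvPolynomial σ R} :
    f ∈ monomialSpan R a ^ k ↔ ∀ c ∈ f.support, k ≤ adicOrder a c := by
  rw [pow_monomialSpan hne hdisj, mem_ideal_span_monomial_image]
  exact forall₂_congr fun c _ =>
    ⟨fun ⟨c', hc', hle⟩ => hc'.trans (adicOrder_mono hne hle), fun h => ⟨c, h, le_rfl⟩⟩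

section Witness

variable {j : ι → σ} {s : ι}

/-- The exponent of `(∏ᵢ uᵢ / x_{jᵢ}) · u_s^(k-1)`. -/
def witness (a : ι → σ →₀ ℕ) (j : ι → σ) (s : ι) (k : ℕ) : σ →₀ ℕ :=
  ∑ i, (a i - single (j i) 1) + (k - 1) • a s

theorem witness_apply [DecidableEq ι]
    (hdisj : Pairwise fun i j => Disjoint (a i).support (a j).support)
    (hj : ∀ i, j i ∈ (a i).support) (hk : 1 ≤ k) (t : ι) :
    witness a j s k (j t) + 1 = (if t = s then k else 1) * a t (j t) := by
  have hoff : ∀ i ≠ t, a i (j t) = 0 := fun i hi =>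
    notMem_support_iff.1 (Finset.disjoint_right.1 (hdisj hi) (hj t))
  have hsum : (∑ i, (a i - single (j i) 1) : σ →₀ ℕ) (j t) = a t (j t) - 1 := by
    rw [finsetSum_apply, Finset.sum_eq_single t (fun i _ hi => by simp [hoff i hi]) (by simp)]
    simp
  have hpos : 1 ≤ a t (j t) := Nat.one_le_iff_ne_zero.2 (mem_support_iff.1 (hj t))
  rw [witness, Finsupp.add_apply, hsum, Finsupp.smul_apply, smul_eq_mul]
  split_ifs with hts
  · subst hts
    obtain ⟨k, rfl⟩ := Nat.exists_eq_add_of_le hk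
    rw [add_tsub_cancel_left, add_mul, one_mul]
    omega
  · rw [hoff s (Ne.symm hts)]
    omega

theorem nsmulMultiplicity_add_witness_lt [DecidableEq ι]
    (hdisj : Pairwise fun i j => Disjoint (a i).support (a j).support)
    (hj : ∀ i, j i ∈ (a i).support) (hk : 1 ≤ k) {c : σ →₀ ℕ} (t : ι) (hc : c (j t) = 0) :
    (a t).nsmulMultiplicity (c + witness a j s k) < if t = s then k else 1 := by
  have ha : a t ≠ 0 := fun h => by simpa [h] using hj t
  have hw := witness_apply (s := s) hdisj hj hk t
  by_contra! hge
  have hcoord := (le_nsmulMultiplicity_iff ha).1 hge (j t)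
  rw [Finsupp.smul_apply, smul_eq_mul, Finsupp.add_apply, hc, zero_add] at hcoord
  omega

theorem adicOrder_add_witness_lt
    (hdisj : Pairwise fun i j => Disjoint (a i).support (a j).support)
    (hj : ∀ i, j i ∈ (a i).support) (hk : 1 ≤ k) {c : σ →₀ ℕ} (hc : ∀ i, c (j i) = 0) :
    adicOrder a (c + witness a j s k) < k := by
  classical
  have hle : ∀ t, (a t).nsmulMultiplicity (c + witness a j s k) ≤ if t = s then k - 1 else 0 :=
    fun t => by
      have := nsmulMultiplicity_add_witness_lt (s := s) hdisj hj hk t (hc t)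
      split_ifs at this ⊢ <;> omega
  calc adicOrder a (c + witness a j s k) ≤ ∑ t, if t = s then k - 1 else 0 :=
        Finset.sum_le_sum fun t _ => hle t
    _ < k := by rw [Finset.sum_ite_eq' Finset.univ s, if_pos (Finset.mem_univ s)]; omega

theorem monomial_single_add_witness_mem
    (hj : ∀ i, j i ∈ (a i).support) (hk : 1 ≤ k) (t : ι) :
    monomial (single (j t) 1 + witness a j s k) (1 : R) ∈ monomialSpan R a ^ k := by
  have hprod : monomial (a t + (k - 1) • a s) (1 : R) ∈ monomialSpan R a ^ k := by
    have hpow : monomialSpan R a * monomialSpan R a ^ (k - 1) = monomialSpan R a ^ k := by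
      rw [← pow_succ', Nat.sub_add_cancel hk]
    have heq : monomial (a t + (k - 1) • a s) (1 : R) =
        monomial (a t) 1 * monomial (a s) 1 ^ (k - 1) := by
      rw [monomial_pow, one_pow, monomial_mul, one_mul]
    rw [← hpow, heq]
    exact Ideal.mul_mem_mul (monomial_mem_monomialSpan t)
      (Ideal.pow_mem_pow (monomial_mem_monomialSpan s) _)
  have hle : a t + (k - 1) • a s ≤ single (j t) 1 + witness a j s k := by
    rw [witness, ← add_assoc]
    refine add_le_add_left ?_ _
    have hsum : a t - single (j t) 1 ≤ ∑ i, (a i - single (j i) 1) :=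
      Finset.single_le_sum (f := fun i => a i - single (j i) 1) (fun i _ => zero_le)
        (Finset.mem_univ t)
    calc a t = single (j t) 1 + (a t - single (j t) 1) :=
          (add_tsub_cancel_of_le (single_le_of_mem_support (hj t))).symm
      _ ≤ single (j t) 1 + ∑ i, (a i - single (j i) 1) := add_le_add_right hsum _
  obtain ⟨d, hd⟩ := exists_add_of_le hle
  rw [hd, add_comm, ← one_mul (1 : R), ← monomial_mul]
  exact Ideal.mul_mem_left _ _ hprod

theorem colon_witness (hne : ∀ i, a i ≠ 0)
    (hdisj : Pairwise fun i j => Disjoint (a i).support (a j).support)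
    (hj : ∀ i, j i ∈ (a i).support) (hk : 1 ≤ k) :
    (monomialSpan R a ^ k).colon (Ideal.span {monomial (witness a j s k) (1 : R)}) =
      Ideal.span (X '' Set.range j) := by
  apply le_antisymm
  · intro g hg
    rw [Ideal.mem_colon_span_singleton, mem_pow_monomialSpan_iff hne hdisj] at hg
    rw [mem_ideal_span_X_image]
    intro c hc
    by_contra! hcj
    have hmem : c + witness a j s k ∈ (g * monomial (witness a j s k) 1).support := by
      rw [MvPolynomial.mem_support_iff, coeff_mul_monomial, mul_one]
      exact MvPolynomial.mem_support_iff.1 hc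
    exact (hg _ hmem).not_gt (adicOrder_add_witness_lt hdisj hj hk fun i => hcj _ ⟨i, rfl⟩)
  · rw [Ideal.span_le]
    rintro _ ⟨_, ⟨t, rfl⟩, rfl⟩
    rw [SetLike.mem_coe, Ideal.mem_colon_span_singleton, X, monomial_mul, one_mul]
    exact monomial_single_add_witness_mem hj hk t

theorem degree_witness (hj : ∀ i, j i ∈ (a i).support) :
    (witness a j s k).degree + Fintype.card ι = ∑ i, (a i).degree + (k - 1) * (a s).degree := by
  have h : ∀ i, (a i - single (j i) 1).degree + 1 = (a i).degree := fun i => by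
    calc (a i - single (j i) 1).degree + 1 = (a i - single (j i) 1 + single (j i) 1).degree := by
          rw [map_add, degree_single]
      _ = (a i).degree := by rw [tsub_add_cancel_of_le (single_le_of_mem_support (hj i))]
  simp only [witness, map_add, map_sum, map_nsmul, smul_eq_mul, ← h, Finset.sum_add_distrib,
    Finset.sum_const, Finset.card_univ]
  ring

end Witness

theorem adicOrder_add_single_le (hne : ∀ i, a i ≠ 0)
    (hdisj : Pairwise fun i j => Disjoint (a i).support (a j).support) {c : σ →₀ ℕ} {i : ι}
    {l : σ} (hl : l ∈ (a i).support) :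
    adicOrder a (c + single l 1) ≤ adicOrder a c + 1 := by
  have h := adicOrder_add_of_support_subset hne hdisj (c := c) (e := single l 1)
    (support_single_subset.trans (Finset.singleton_subset_iff.2 hl))
  have hle := nsmulMultiplicity_add_single_le (c := c) hl
  omega

theorem succ_nsmul_le_add_single_of_adicOrder_lt (hne : ∀ i, a i ≠ 0)
    (hdisj : Pairwise fun i j => Disjoint (a i).support (a j).support) {c : σ →₀ ℕ} {i : ι}
    {l : σ} (hl : l ∈ (a i).support) (hlt : adicOrder a c < adicOrder a (c + single l 1)) :
    ((a i).nsmulMultiplicity c + 1) • a i ≤ c + single l 1 := by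
  have h := adicOrder_add_of_support_subset hne hdisj (c := c) (e := single l 1)
    (support_single_subset.trans (Finset.singleton_subset_iff.2 hl))
  exact (le_nsmulMultiplicity_iff (hne i)).1 (by omega)

theorem degree_add_card_le_of_adicOrder_jump [Nonempty ι]
    (hdisj : Pairwise fun i j => Disjoint (a i).support (a j).support)
    {j : ι → σ} (hj : ∀ i, j i ∈ (a i).support) {c : σ →₀ ℕ} (hc : adicOrder a c < k)
    (hjump : ∀ i, k ≤ adicOrder a (c + single (j i) 1)) {α : ℕ} (hα : ∀ i, α ≤ (a i).degree) :
    ∑ i, (a i).degree + (k - 1) * α ≤ c.degree + Fintype.card ι := by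
  have hne : ∀ i, a i ≠ 0 := fun i h => by simpa [h] using hj i
  set q := fun i => (a i).nsmulMultiplicity c
  have hk : k - 1 ≤ ∑ i, q i := by
    have h : adicOrder a c = ∑ i, q i := rfl
    have := (hjump (Classical.arbitrary ι)).trans (adicOrder_add_single_le hne hdisj (hj _))
    omega
  -- `x^(v i) = uᵢ^(qᵢ+1) / x_{jᵢ}` divides `x^c`.
  set v := fun i => (q i + 1) • a i - single (j i) 1
  have hv_le : ∀ i, v i ≤ c := fun i => tsub_le_iff_right.2 <|
    succ_nsmul_le_add_single_of_adicOrder_lt hne hdisj (hj i) (hc.trans_le (hjump i))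
  have hv_disj : Pairwise fun i i' => Disjoint (v i).support (v i').support := fun i i' h =>
    have hsub : ∀ i, (v i).support ⊆ (a i).support := fun i =>
      (support_mono tsub_le_self).trans support_smul
    (hdisj h).mono (hsub i) (hsub i')
  have hv_deg : ∀ i, (v i).degree + 1 = (q i + 1) * (a i).degree := fun i => by
    have hsingle : single (j i) 1 ≤ (q i + 1) • a i := by
      rw [succ_nsmul]
      exact (single_le_of_mem_support (hj i)).trans le_add_self
    calc (v i).degree + 1 = (v i + single (j i) 1).degree := by rw [map_add, degree_single]
      _ = (q i + 1) * (a i).degree := by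
        rw [tsub_add_cancel_of_le hsingle, map_nsmul, smul_eq_mul]
  have hsum_le : ∑ i, (v i).degree ≤ c.degree := by
    rw [← map_sum]
    exact degree_mono (sum_le_of_pairwise_disjoint hv_disj hv_le)
  calc ∑ i, (a i).degree + (k - 1) * α ≤ ∑ i, (a i).degree + ∑ i, q i * (a i).degree := by
        gcongr
        calc (k - 1) * α ≤ (∑ i, q i) * α := Nat.mul_le_mul_right α hk
          _ = ∑ i, q i * α := Finset.sum_mul _ _ _
          _ ≤ ∑ i, q i * (a i).degree := by gcongr with i; exact hα i
    _ = ∑ i, ((v i).degree + 1) := by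
        rw [← Finset.sum_add_distrib]
        exact Finset.sum_congr rfl fun i _ => by rw [hv_deg]; ring
    _ ≤ c.degree + Fintype.card ι := by
        rw [Finset.sum_add_distrib, Finset.sum_const, Finset.card_univ, smul_eq_mul, mul_one]
        omega

theorem exists_adicOrder_jump_of_colon_eq (hne : ∀ i, a i ≠ 0)
    (hdisj : Pairwise fun i j => Disjoint (a i).support (a j).support)
    {p : Ideal (MvPolynomial σ R)} (hp : p.IsPrime) {f : MvPolynomial σ R} {d : ℕ}
    (hf : f.IsHomogeneous d) (hcolon : (monomialSpan R a ^ k).colon (Ideal.span {f}) = p) :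
    ∃ c : σ →₀ ℕ, c.degree = d ∧ adicOrder a c < k ∧ ∃ j : ι → σ,
      (∀ i, j i ∈ (a i).support) ∧ ∀ i, k ≤ adicOrder a (c + single (j i) 1) := by
  have hmem : ∀ {g}, g ∈ p ↔ g * f ∈ monomialSpan R a ^ k := by
    intro g; rw [← hcolon, Ideal.mem_colon_span_singleton]
  have hf_not : f ∉ monomialSpan R a ^ k := fun h =>
    hp.ne_top ((Ideal.eq_top_iff_one _).2 (hmem.2 (by rwa [one_mul])))
  rw [mem_pow_monomialSpan_iff hne hdisj] at hf_not
  push Not at hf_not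
  obtain ⟨c, hc, hlt⟩ := hf_not
  have hvar : ∀ i, ∃ l ∈ (a i).support, X l ∈ p := fun i =>
    exists_X_mem_of_monomial_mem hp <| hp.mem_of_pow_mem k <| hmem.2 <|
      Ideal.mul_mem_right _ _ (Ideal.pow_mem_pow (monomial_mem_monomialSpan i) k)
  choose j hj hjp using hvar
  refine ⟨c, hf.degree_eq_of_mem_support hc, hlt, j, hj,
    fun i => (mem_pow_monomialSpan_iff hne hdisj).1 (hmem.1 (hjp i)) _ ?_⟩
  rw [MvPolynomial.mem_support_iff, add_comm, coeff_X_mul]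
  exact MvPolynomial.mem_support_iff.1 hc

theorem degree_add_card_le_of_colon_eq [Nonempty ι]
    (hne : ∀ i, a i ≠ 0) (hdisj : Pairwise fun i j => Disjoint (a i).support (a j).support)
    {p : Ideal (MvPolynomial σ R)} (hp : p.IsPrime) {f : MvPolynomial σ R} {d : ℕ}
    (hf : f.IsHomogeneous d) (hcolon : (monomialSpan R a ^ k).colon (Ideal.span {f}) = p)
    {α : ℕ} (hα : ∀ i, α ≤ (a i).degree) :
    ∑ i, (a i).degree + (k - 1) * α ≤ d + Fintype.card ι := by
  obtain ⟨c, rfl, hlt, j, hj, hjump⟩ := exists_adicOrder_jump_of_colon_eq hne hdisj hp hf hcolon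
  exact degree_add_card_le_of_adicOrder_jump hdisj hj hlt hjump hα

end MonomialCompleteIntersection

namespace MonomialCompleteIntersection

open Finsupp

variable {σ : Type} {ι : Type*} {a : ι → σ →₀ ℕ} {k : ℕ} {K : Type} [Field K]

theorem alphaDeg_monomialSpan {s : ι}
    (hs : ∀ i, (a s).degree ≤ (a i).degree) : alphaDeg (monomialSpan K a) = (a s).degree := by
  have hgen : (a s).degree ∈ {d | ∃ f ∈ monomialSpan K a, f ≠ 0 ∧ f.IsHomogeneous d} :=
    ⟨_, monomial_mem_monomialSpan s, by simp, isHomogeneous_monomial _ rfl⟩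
  refine le_antisymm (Nat.sInf_le hgen) (le_csInf ⟨_, hgen⟩ ?_)
  rintro d ⟨f, hfI, hf0, hf⟩
  obtain ⟨c, hc⟩ := support_nonempty.2 hf0
  rw [monomialSpan_eq_span_image, mem_ideal_span_monomial_image] at hfI
  obtain ⟨_, ⟨i, rfl⟩, hle⟩ := hfI c hc
  calc (a s).degree ≤ (a i).degree := hs i
    _ ≤ c.degree := degree_mono hle
    _ = d := hf.degree_eq_of_mem_support hc

theorem vnumber_pow_monomialSpan [Fintype ι] (hne : ∀ i, a i ≠ 0)
    (hdisj : Pairwise fun i j => Disjoint (a i).support (a j).support) (hk : 1 ≤ k) {s : ι}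
    (hs : ∀ i, (a s).degree ≤ (a i).degree) :
    vnumber (monomialSpan K a ^ k) + Fintype.card ι =
      ∑ i, (a i).degree + (k - 1) * (a s).degree := by
  have : Nonempty ι := ⟨s⟩
  choose j hj using fun i => support_nonempty_iff.2 (hne i)
  have hcolon := colon_witness (R := K) (s := s) hne hdisj hj hk
  have hass := Ideal.mem_associatedPrimes_quotient_of_colon_eq (isPrime_span_X_image _) hcolon
  have hhom := isHomogeneous_monomial (1 : K) (rfl : (witness a j s k).degree = _)
  have hv : vnumber (monomialSpan K a ^ k) = (witness a j s k).degree := by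
    refine le_antisymm (Nat.sInf_le ⟨_, hass, _, hhom, hcolon⟩)
      (le_csInf ⟨_, _, hass, _, hhom, hcolon⟩ ?_)
    rintro d ⟨p, hp, f, hf, hfp⟩
    have := degree_add_card_le_of_colon_eq hne hdisj hp.isPrime hf hfp hs
    have := degree_witness (s := s) (k := k) hj
    omega
  rw [hv, degree_witness hj]

end MonomialCompleteIntersection

/-- Corollary 5.6(c): let `u_1,…,u_m` be nonconstant monomials with
pairwise disjoint supports and `I = (u_1,…,u_m)` the monomial complete intersection they
generate (so `μ(I) = m`).  Then for every `k ≥ 1`,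
`v(I^k) = α(I)·k + (∑_i deg(u_i) − α(I) − m)`, where `α(I) = min_i deg(u_i)`. -/
theorem stmt14 {K : Type} [Field K] {n m : ℕ} (hm : 1 ≤ m)
    (a : Fin m → (Fin n →₀ ℕ)) (hne : ∀ i, a i ≠ 0)
    (hdisj : Pairwise fun i j => Disjoint (a i).support (a j).support)
    (I : Ideal (MvPolynomial (Fin n) K))
    (hI : I = Ideal.span (Set.range fun i => (monomial (a i) (1 : K)))) :
    ∀ k : ℕ, 1 ≤ k →
      (vnumber (I ^ k) : ℤ) = (alphaDeg I : ℤ) * k +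
        ((∑ i, ((monomial (a i) (1 : K) : MvPolynomial (Fin n) K).totalDegree : ℤ)) -
          (alphaDeg I : ℤ) - m) := by
  intro k hk
  have hI' : I = MonomialCompleteIntersection.monomialSpan K a := hI
  obtain ⟨s, -, hs⟩ := Finset.exists_min_image Finset.univ (fun i => (a i).degree)
    (Finset.univ_nonempty_iff.2 ⟨⟨0, hm⟩⟩)
  have hmin : ∀ i, (a s).degree ≤ (a i).degree := fun i => hs i (Finset.mem_univ i)
  have hv := MonomialCompleteIntersection.vnumber_pow_monomialSpan (K := K) hne hdisj hk hmin
  have htd : ∀ i, (monomial (a i) (1 : K)).totalDegree = (a i).degree := fun i =>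
    totalDegree_monomial _ one_ne_zero
  rw [Fintype.card_fin] at hv
  rw [hI', MonomialCompleteIntersection.alphaDeg_monomialSpan hmin]
  simp only [htd]
  zify [hk] at hv
  linear_combination hv
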